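/- arXiv:math/0602230 — 2 statements merged into one kernel-verified Lean document; each statement's English description precedes it below -/
import Mathlib

section
/- For every integer α, the only smooth functions x: ℝ → ℝ satisfying x(t+1) = x(t) + 2πα and the rotating pendulum equation x''(t) = -sin(x(t) - 2παt) are x⁽⁰⁾(t) = 2παt + 2πm and x⁽¹⁾(t) = 2παt + π + 2πm for integers m. -/
open Real

open Set in
/-- A continuous 1-periodic function on `ℝ` attains its maximum. -/
lemma periodic_attains_max {f : ℝ → ℝ} (hf : Continuous f)
    (hp : Function.Periodic f 1) : ∃ t0, ∀ t, f t ≤ f t0 := by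
  obtain ⟨t0, _, ht0⟩ := isCompact_Icc.exists_isMaxOn (nonempty_Icc.2 zero_le_one)
    hf.continuousOn
  refine ⟨t0, fun t => ?_⟩
  obtain ⟨y, hy, hfy⟩ := hp.exists_mem_Ico₀ one_pos t
  rw [hfy]
  exact ht0 (Ico_subset_Icc_self hy)


set_option maxHeartbeats 1000000 in
open Set in
/-- The only loops of winding number `α` on `𝕋¹ = ℝ/2πℤ` solving the rotating
pendulum equation `x'' = -sin (x - 2παt)` are the two equilibria
`x⁽⁰⁾(t) = 2παt (+ 2πm)` and `x⁽¹⁾(t) = 2παt + π (+ 2πm)`. -/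
theorem rotating_pendulum_critical_points (α : ℤ) (x : ℝ → ℝ)
    (hx : ContDiff ℝ 2 x)
    (hper : ∀ t : ℝ, x (t + 1) = x t + 2 * π * α)
    (hode : ∀ t : ℝ, deriv (deriv x) t = -Real.sin (x t - 2 * π * α * t)) :
    ∃ m : ℤ, (∀ t : ℝ, x t = 2 * π * α * t + 2 * π * m) ∨
      (∀ t : ℝ, x t = 2 * π * α * t + π + 2 * π * m) := by
  set c : ℝ := 2 * π * α with hc
  have hx' : ContDiff ℝ ((1:WithTop ℕ∞)+1) x := by norm_num at hx ⊢; exact hx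
  have h1 := contDiff_succ_iff_deriv.mp hx'
  have hx1 : Differentiable ℝ x := h1.1
  have hdx1 : Differentiable ℝ (deriv x) := h1.2.2.differentiable one_ne_zero
  -- periodicity of deriv x
  have hpd : ∀ t, deriv x (t + 1) = deriv x t := by
    intro t
    have hfun : (fun s => x (s + 1)) = fun s => x s + c := funext fun s => hper s
    have h2 : deriv (fun s => x (s + 1)) t = deriv x t := by
      rw [hfun, deriv_add_const]
    rw [← h2, deriv_comp_add_const]
  set u : ℝ → ℝ := fun t => deriv x t - c with hu
  have hud : Differentiable ℝ u := hdx1.sub_const c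
  have hucont : Continuous u := hud.continuous
  have hpu : Function.Periodic u 1 := fun t => by simp [hu, hpd t]
  -- first derivative of u
  have hderu : deriv u = fun t => -Real.sin (x t - c * t) := by
    funext t
    have : deriv u t = deriv (deriv x) t := by
      rw [hu]; exact deriv_sub_const c
    rw [this, hode t]
  -- σ has derivative u
  have hσ : ∀ t, HasDerivAt (fun s => x s - c * s) (u t) t := by
    intro t
    have ha := (hx1 t).hasDerivAt
    have hb : HasDerivAt (fun s : ℝ => c * s) c t := by
      simpa using (hasDerivAt_id t).const_mul c
    exact ha.sub hb
  -- second derivative of u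
  have hu'' : ∀ t, HasDerivAt (deriv u) (-(Real.cos (x t - c * t) * u t)) t := by
    intro t
    rw [hderu]
    exact ((Real.hasDerivAt_sin _).comp t (hσ t)).neg
  -- max and min of u
  obtain ⟨t0, ht0⟩ := periodic_attains_max hucont hpu
  have hpun : Function.Periodic (fun t => -u t) 1 := fun t => by simp [hpu t]
  obtain ⟨t1, ht1'⟩ := periodic_attains_max hucont.neg hpun
  have ht1 : ∀ t, u t1 ≤ u t := fun t => by have := ht1' t; simpa using this
  -- u vanishes at a max point of σ
  have hσper : Function.Periodic (fun s => x s - c * s) 1 := by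
    intro t
    simp only [hper t]
    ring
  obtain ⟨s0, hs0⟩ := periodic_attains_max
    (hx1.continuous.sub (continuous_const.mul continuous_id)) hσper
  have hus0 : u s0 = 0 := by
    have hmax : IsLocalMax (fun s => x s - c * s) s0 := Filter.Eventually.of_forall hs0
    have h6 := hmax.deriv_eq_zero
    rwa [(hσ s0).deriv] at h6
  set M := u t0 with hM
  set m := u t1 with hm
  have hm0 : m ≤ 0 := hus0 ▸ ht1 s0
  have hM0 : 0 ≤ M := hus0 ▸ ht0 s0
  set C := M - m with hC
  have hC0 : 0 ≤ C := by linarith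
  have habs : ∀ t, |u t| ≤ C := by
    intro t
    rw [abs_le]
    constructor <;> [skip; skip] <;> · have h1 := ht0 t; have h2 := ht1 t; linarith
  -- deriv u t0 = 0
  have hdu0 : deriv u t0 = 0 := by
    have hmax : IsLocalMax u t0 := Filter.Eventually.of_forall ht0
    exact hmax.deriv_eq_zero
  -- Lipschitz bound on deriv u
  have hlip : ∀ t, |deriv u t| ≤ C * |t - t0| := by
    intro t
    have hb : ∀ s ∈ (univ : Set ℝ), ‖deriv (deriv u) s‖ ≤ C := by
      intro s _
      rw [(hu'' s).deriv]
      calc ‖-(Real.cos (x s - c * s) * u s)‖ = |Real.cos (x s - c * s)| * |u s| := by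
            rw [norm_neg]; exact abs_mul _ _
        _ ≤ 1 * C := by
            exact mul_le_mul (Real.abs_cos_le_one _) (habs s) (abs_nonneg _) zero_le_one
        _ = C := one_mul C
    have := Convex.norm_image_sub_le_of_norm_deriv_le
      (fun s _ => (hu'' s).differentiableAt) hb convex_univ (mem_univ t0) (mem_univ t)
    simpa [hdu0] using this
  -- quadratic lower bound for u
  have hlow : ∀ t, M - C / 2 * (t - t0) ^ 2 ≤ u t := by
    have hv : ∀ s : ℝ, HasDerivAt (fun s => u s + C / 2 * (s - t0) ^ 2)
        (deriv u s + C * (s - t0)) s := by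
      intro s
      have h2 : HasDerivAt (fun s : ℝ => (s - t0) ^ 2) (2 * (s - t0)) s := by
        simpa using ((hasDerivAt_id s).sub_const t0).fun_pow 2
      have := ((hud s).hasDerivAt).fun_add (h2.const_mul (C / 2))
      refine this.congr_deriv ?_
      ring
    intro t
    rcases le_total t0 t with h | h
    · have hmono : MonotoneOn (fun s => u s + C / 2 * (s - t0) ^ 2) (Ici t0) := by
        apply monotoneOn_of_deriv_nonneg (convex_Ici t0)
        · exact ((hucont.add ((continuous_const.mul ((continuous_id.sub continuous_const).pow 2))))).continuousOn
        · intro s _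
          exact (hv s).differentiableAt.differentiableWithinAt
        · intro s hs
          rw [interior_Ici] at hs
          rw [(hv s).deriv]
          have h3 := hlip s
          have h4 : |s - t0| = s - t0 := abs_of_pos (by simp at hs; linarith)
          rw [h4] at h3
          have := (abs_le.mp h3).1
          linarith
      have := hmono self_mem_Ici (mem_Ici.mpr h) h
      simp only at this
      nlinarith [this]
    · have hanti : AntitoneOn (fun s => u s + C / 2 * (s - t0) ^ 2) (Iic t0) := by
        apply antitoneOn_of_deriv_nonpos (convex_Iic t0)
        · exact ((hucont.add ((continuous_const.mul ((continuous_id.sub continuous_const).pow 2))))).continuousOn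
        · intro s _
          exact (hv s).differentiableAt.differentiableWithinAt
        · intro s hs
          rw [interior_Iic] at hs
          rw [(hv s).deriv]
          have h3 := hlip s
          have h4 : |s - t0| = t0 - s := by
            rw [abs_of_neg (show s - t0 < 0 by simp at hs; linarith)]; ring
          rw [h4] at h3
          have := (abs_le.mp h3).2
          linarith
      have := hanti (mem_Iic.mpr h) self_mem_Iic h
      simp only at this
      nlinarith [this]
  -- move the min point close to t0
  have hCle : C ≤ C / 8 := by
    set k : ℤ := round (t0 - t1) with hk
    have hdist : |t1 + (k:ℝ) - t0| ≤ 1 / 2 := by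
      have h7 := abs_sub_round (t0 - t1)
      have h8 : t1 + (k:ℝ) - t0 = -(t0 - t1 - (k:ℝ)) := by ring
      rw [h8, abs_neg]
      exact h7
    have hval : u (t1 + (k:ℝ)) = m := by
      simpa using (hpu.int_mul k) t1
    have hsq : (t1 + (k:ℝ) - t0) ^ 2 ≤ (1/2) ^ 2 := by
      rw [← sq_abs]
      exact pow_le_pow_left₀ (abs_nonneg _) hdist 2
    have h5 := hlow (t1 + (k:ℝ))
    rw [hval] at h5
    have h9 : C * (t1 + (k:ℝ) - t0) ^ 2 ≤ C * (1/2)^2 :=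
      mul_le_mul_of_nonneg_left hsq hC0
    clear_value C M m
    linarith
  have hCzero : C = 0 := by linarith
  have hMzero : M = 0 := by
    have : m = M := by linarith
    linarith
  have huz : ∀ t, u t = 0 := by
    intro t
    have h1 := ht0 t
    have h2 := ht1 t
    have : m = 0 := by simp [hC] at hCzero; linarith
    rw [hMzero] at h1
    rw [this] at h2
    linarith
  -- x is affine
  have hxt : ∀ t, x t = c * t + x 0 := by
    intro t
    have hg : Differentiable ℝ (fun s => x s - c * s) :=
      fun s => (hσ s).differentiableAt
    have hgz : ∀ s, deriv (fun s => x s - c * s) s = 0 := fun s => by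
      rw [(hσ s).deriv, huz s]
    have := is_const_of_deriv_eq_zero hg hgz t 0
    simp only [mul_zero, sub_zero] at this
    linarith
  -- sin (x 0) = 0
  have hsin : Real.sin (x 0) = 0 := by
    have h0 := hode 0
    have hdx : deriv x = fun _ => c := funext fun t => by
      have := huz t; simp only [hu] at this; linarith
    rw [hdx] at h0
    simp only [deriv_const', mul_zero, sub_zero] at h0
    linarith
  obtain ⟨k, hk⟩ := Real.sin_eq_zero_iff.mp hsin
  rcases Int.even_or_odd k with ⟨n, hn⟩ | ⟨n, hn⟩
  · refine ⟨n, Or.inl fun t => ?_⟩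
    rw [hxt t, ← hk, hn, hc]
    push_cast
    ring
  · refine ⟨n, Or.inr fun t => ?_⟩
    rw [hxt t, ← hk, hn, hc]
    push_cast
    ring
end

section
/- Every nonconstant periodic solution of the pendulum equation σ'' = -sin σ has minimal period strictly greater than 2π; in particular there is no nonconstant solution of period 1. -/
open Real Set

private lemma basic_derivs {σ : ℝ → ℝ} (hσ : ContDiff ℝ 2 σ) :
    Differentiable ℝ σ ∧ Differentiable ℝ (deriv σ) := by
  have h1 : ContDiff ℝ (1 + 1 : ℕ) σ := by norm_num; exact hσ
  rw [show ((1+1 : ℕ) : WithTop ℕ∞) = (1 : WithTop ℕ∞) + 1 by norm_num] at h1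
  obtain ⟨hd1, -, h2⟩ := contDiff_succ_iff_deriv.mp h1
  exact ⟨hd1, h2.differentiable (by simp)⟩

/-- Core Sturm-type gap lemma: if `v = σ'` vanishes at `a < b` and is positive
in between, then `b - a > π`. -/
private lemma gapA (σ : ℝ → ℝ) (hσ : ContDiff ℝ 2 σ)
    (hode : ∀ t, deriv (deriv σ) t = -Real.sin (σ t))
    (a b : ℝ) (hab : a < b) (ha : deriv σ a = 0) (hb : deriv σ b = 0)
    (hpos : ∀ t ∈ Set.Ioo a b, 0 < deriv σ t) : π < b - a := by
  by_contra hle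
  push_neg at hle
  obtain ⟨hd1, hd2⟩ := basic_derivs hσ
  set v := deriv σ with hv
  have hvd : ∀ t, HasDerivAt v (-Real.sin (σ t)) t := fun t => by
    have h := (hd2 t).hasDerivAt
    rwa [hode t] at h
  -- sin (σ b) ≥ 0 because v'(b) ≤ 0 (v ≥ 0 to the left of b, v b = 0)
  have hsb : 0 ≤ Real.sin (σ b) := by
    have hten : Filter.Tendsto (slope v b) (nhdsWithin b (Iio b)) (nhds (-Real.sin (σ b))) :=
      (hasDerivAt_iff_tendsto_slope.mp (hvd b)).mono_left
        (nhdsWithin_mono b (fun x hx => ne_of_lt hx))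
    have hkey : -Real.sin (σ b) ≤ 0 := by
      refine le_of_tendsto hten ?_
      filter_upwards [Ioo_mem_nhdsLT_of_mem (show b ∈ Ioc a b from ⟨hab, le_rfl⟩)] with t ht
      have h1 : 0 < v t := hpos t ht
      have h2 : t - b < 0 := by linarith [ht.2]
      rw [slope_def_field]
      rw [hb]
      have : (v t - 0) / (t - b) ≤ 0 := div_nonpos_of_nonneg_of_nonpos (by linarith) h2.le
      simpa [div_eq_mul_inv] using this
    linarith
  -- the Wronskian-type function
  set W : ℝ → ℝ := fun t => v t * Real.cos (t - a) + Real.sin (σ t) * Real.sin (t - a) with hW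
  have hWd : ∀ t, HasDerivAt W ((Real.cos (σ t) - 1) * v t * Real.sin (t - a)) t := by
    intro t
    have h1 : HasDerivAt (fun s : ℝ => s - a) 1 t := (hasDerivAt_id t).sub_const a
    have hcos : HasDerivAt (fun s : ℝ => Real.cos (s - a)) (-Real.sin (t - a)) t := by
      simpa [Function.comp_def] using (Real.hasDerivAt_cos (t - a)).comp t h1
    have hsin : HasDerivAt (fun s : ℝ => Real.sin (s - a)) (Real.cos (t - a)) t := by
      simpa [Function.comp_def] using (Real.hasDerivAt_sin (t - a)).comp t h1
    have hs : HasDerivAt (fun s => Real.sin (σ s)) (Real.cos (σ t) * v t) t :=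
      (Real.hasDerivAt_sin (σ t)).comp t (hd1 t).hasDerivAt
    have h := ((hvd t).mul hcos).add (hs.mul hsin)
    refine h.congr_deriv ?_
    ring
  have hWdiff : Differentiable ℝ W := fun t => (hWd t).differentiableAt
  have hWanti : AntitoneOn W (Icc a b) := by
    refine antitoneOn_of_deriv_nonpos (convex_Icc a b) hWdiff.continuous.continuousOn
      (hWdiff.differentiableOn) ?_
    intro t ht
    rw [interior_Icc] at ht
    rw [(hWd t).deriv]
    have h1 : Real.cos (σ t) - 1 ≤ 0 := by linarith [Real.cos_le_one (σ t)]
    have h2 : 0 < v t := hpos t ht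
    have h3 : 0 ≤ Real.sin (t - a) :=
      Real.sin_nonneg_of_nonneg_of_le_pi (by linarith [ht.1]) (by linarith [ht.2])
    have := mul_nonneg h2.le h3
    nlinarith
  have hWa : W a = 0 := by simp [hW, ha]
  have hWb : 0 ≤ W b := by
    have h3 : 0 ≤ Real.sin (b - a) :=
      Real.sin_nonneg_of_nonneg_of_le_pi (by linarith) (by linarith)
    simp only [hW, hb, zero_mul, zero_add]
    exact mul_nonneg hsb h3
  have hW0 : ∀ t ∈ Icc a b, W t = 0 := by
    intro t ht
    have h1 : W t ≤ W a := hWanti (left_mem_Icc.mpr hab.le) ht ht.1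
    have h2 : W b ≤ W t := hWanti ht (right_mem_Icc.mpr hab.le) ht.2
    linarith [hWa ▸ h1, hWb]
  -- deriv W = 0 in the interior, hence cos (σ t) = 1 there, hence sin (σ t) = 0
  have hsin0 : ∀ t ∈ Ioo a b, Real.sin (σ t) = 0 := by
    intro t ht
    have hev : W =ᶠ[nhds t] fun _ => (0 : ℝ) := by
      filter_upwards [isOpen_Ioo.mem_nhds ht] with s hs
      exact hW0 s (Ioo_subset_Icc_self hs)
    have hDW : (Real.cos (σ t) - 1) * v t * Real.sin (t - a) = 0 := by
      have h := hev.deriv_eq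
      rw [(hWd t).deriv] at h
      simpa using h
    have h2 : 0 < v t := hpos t ht
    have h3 : 0 < Real.sin (t - a) :=
      Real.sin_pos_of_pos_of_lt_pi (by linarith [ht.1]) (by linarith [ht.2])
    have hc1 : Real.cos (σ t) = 1 := by
      rcases mul_eq_zero.mp hDW with h | h
      · rcases mul_eq_zero.mp h with h' | h'
        · linarith
        · exact absurd h' h2.ne'
      · exact absurd h h3.ne'
    have hpy := Real.sin_sq_add_cos_sq (σ t)
    nlinarith [sq_nonneg (Real.sin (σ t))]
  -- then v is monotone on [a,b] with v a = 0, contradicting positivity at the midpoint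
  have hmono : MonotoneOn v (Icc a b) := by
    refine monotoneOn_of_deriv_nonneg (convex_Icc a b) hd2.continuous.continuousOn
      hd2.differentiableOn ?_
    intro t ht
    rw [interior_Icc] at ht
    rw [hode t, hsin0 t ht]
    simp
  have hmid : (a + b) / 2 ∈ Ioo a b := ⟨by linarith, by linarith⟩
  have h1 : v ((a + b) / 2) ≤ v b :=
    hmono (Ioo_subset_Icc_self hmid) (right_mem_Icc.mpr hab.le) hmid.2.le
  have h2 : 0 < v ((a + b) / 2) := hpos _ hmid
  rw [hb] at h1
  linarith

private lemma sign_dichotomy (f : ℝ → ℝ) (hf : Continuous f) (a b : ℝ)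
    (hne : ∀ t ∈ Ioo a b, f t ≠ 0) :
    (∀ t ∈ Ioo a b, 0 < f t) ∨ (∀ t ∈ Ioo a b, f t < 0) := by
  by_contra h
  push_neg at h
  obtain ⟨⟨x, hx, hx0⟩, ⟨y, hy, hy0⟩⟩ := h
  have hxneg : f x < 0 := lt_of_le_of_ne hx0 (hne x hx)
  have hypos : 0 < f y := lt_of_le_of_ne hy0 (Ne.symm (hne y hy))
  rcases lt_trichotomy x y with hxy | hxy | hxy
  · obtain ⟨z, hz, hz0⟩ := intermediate_value_Ioo hxy.le hf.continuousOn (show (0:ℝ) ∈ Ioo (f x) (f y) from ⟨hxneg, hypos⟩)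
    exact hne z ⟨lt_trans hx.1 hz.1, lt_trans hz.2 hy.2⟩ hz0
  · rw [hxy] at hxneg; linarith
  · obtain ⟨z, hz, hz0⟩ := intermediate_value_Ioo' hxy.le hf.continuousOn (show (0:ℝ) ∈ Ioo (f x) (f y) from ⟨hxneg, hypos⟩)
    exact hne z ⟨lt_trans hy.1 hz.1, lt_trans hz.2 hx.2⟩ hz0

/-- Gap lemma for not-necessarily-consecutive zeros. -/
private lemma gapB (σ : ℝ → ℝ) (hσ : ContDiff ℝ 2 σ)
    (hode : ∀ t, deriv (deriv σ) t = -Real.sin (σ t))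
    (a b : ℝ) (hab : a < b) (ha : deriv σ a = 0) (hb : deriv σ b = 0)
    (s : ℝ) (hs : s ∈ Ioo a b) (hvs : deriv σ s ≠ 0) : π < b - a := by
  obtain ⟨hd1, hd2⟩ := basic_derivs hσ
  set v := deriv σ with hv
  have hvc : Continuous v := hd2.continuous
  -- consecutive zeros around s
  set Z1 : Set ℝ := Icc a s ∩ v ⁻¹' {0} with hZ1
  set Z2 : Set ℝ := Icc s b ∩ v ⁻¹' {0} with hZ2
  have hZ1c : IsCompact Z1 := isCompact_Icc.inter_right (isClosed_singleton.preimage hvc)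
  have hZ2c : IsCompact Z2 := isCompact_Icc.inter_right (isClosed_singleton.preimage hvc)
  have hZ1ne : Z1.Nonempty := ⟨a, ⟨le_rfl, hs.1.le⟩, ha⟩
  have hZ2ne : Z2.Nonempty := ⟨b, ⟨hs.2.le, le_rfl⟩, hb⟩
  set a' := sSup Z1 with ha'
  set b' := sInf Z2 with hb'
  have ha'mem : a' ∈ Z1 := hZ1c.sSup_mem hZ1ne
  have hb'mem : b' ∈ Z2 := hZ2c.sInf_mem hZ2ne
  have ha's : a' < s := lt_of_le_of_ne ha'mem.1.2 (fun h => hvs (h ▸ ha'mem.2))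
  have hsb' : s < b' := lt_of_le_of_ne hb'mem.1.1 (fun h => hvs (by rw [h]; exact hb'mem.2))
  have hne : ∀ t ∈ Ioo a' b', v t ≠ 0 := by
    intro t ht h0
    rcases le_or_gt t s with hts | hts
    · have htZ : t ∈ Z1 := ⟨⟨le_trans ha'mem.1.1 ht.1.le, hts⟩, h0⟩
      exact absurd (le_csSup hZ1c.bddAbove htZ) (not_le.mpr ht.1)
    · have htZ : t ∈ Z2 := ⟨⟨hts.le, le_trans ht.2.le hb'mem.1.2⟩, h0⟩
      exact absurd (csInf_le hZ2c.bddBelow htZ) (not_le.mpr ht.2)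
  have ha'b' : a' < b' := lt_trans ha's hsb'
  have hsub : π < b' - a' := by
    rcases sign_dichotomy v hvc a' b' hne with hsgn | hsgn
    · exact gapA σ hσ hode a' b' ha'b' ha'mem.2 hb'mem.2 hsgn
    · -- apply gapA to -σ
      have hσ' : ContDiff ℝ 2 (fun t => -σ t) := hσ.neg
      have hder : deriv (fun t => -σ t) = fun t => -(deriv σ t) := funext fun t => deriv.fun_neg
      have hode' : ∀ t, deriv (deriv (fun t => -σ t)) t = -Real.sin ((fun t => -σ t) t) := by
        intro t
        rw [hder]
        simp only [deriv.fun_neg, hode t, Real.sin_neg, neg_neg]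
        exact neg_eq_iff_eq_neg.mpr (hode t)
      have hva' : deriv σ a' = 0 := ha'mem.2
      have hvb' : deriv σ b' = 0 := hb'mem.2
      have h := gapA (fun t => -σ t) hσ' hode' a' b' ha'b'
        (by rw [hder]; simp only [hva', neg_zero])
        (by rw [hder]; simp only [hvb', neg_zero])
        (by intro t ht; rw [hder]; simpa using hsgn t ht)
      exact h
  have h1 : a ≤ a' := ha'mem.1.1
  have h2 : b' ≤ b := hb'mem.1.2
  linarith

/-- Every nonconstant periodic solution of the pendulum equation `σ'' = -sin σ`
has all of its periods (in particular the minimal one) strictly greater than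
`2π`; in particular there is no nonconstant solution of period 1. -/
theorem pendulum_minimal_period (σ : ℝ → ℝ) (hσ : ContDiff ℝ 2 σ)
    (hode : ∀ t, deriv (deriv σ) t = -Real.sin (σ t))
    (hnc : ¬ ∃ c : ℝ, ∀ t, σ t = c) :
    (∀ T : ℝ, 0 < T → Function.Periodic σ T → 2 * π < T) ∧
    ¬ Function.Periodic σ 1 := by
  have main : ∀ T : ℝ, 0 < T → Function.Periodic σ T → 2 * π < T := by
    intro T hT hper
    obtain ⟨hd1, hd2⟩ := basic_derivs hσ
    have hcont : Continuous σ := hd1.continuous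
    -- global max
    obtain ⟨t₀, -, ht₀max⟩ := isCompact_Icc.exists_isMaxOn (nonempty_Icc.mpr hT.le)
      hcont.continuousOn (s := Icc (0:ℝ) T)
    have hgmax : ∀ t, σ t ≤ σ t₀ := by
      intro t
      obtain ⟨y, hy, hxy⟩ := hper.exists_mem_Ico hT t 0
      rw [hxy]
      exact ht₀max (Ico_subset_Icc_self (by simpa using hy))
    -- global min on [t₀, t₀ + T]
    obtain ⟨t₁, ht₁mem, ht₁min⟩ := isCompact_Icc.exists_isMinOn
      (nonempty_Icc.mpr (by linarith : t₀ ≤ t₀ + T)) hcont.continuousOn (s := Icc t₀ (t₀ + T))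
    have hgmin : ∀ t, σ t₁ ≤ σ t := by
      intro t
      obtain ⟨y, hy, hxy⟩ := hper.exists_mem_Ico hT t t₀
      rw [hxy]
      exact ht₁min (Ico_subset_Icc_self hy)
    -- max > min since nonconstant
    have hlt : σ t₁ < σ t₀ := by
      rcases lt_or_eq_of_le (hgmin t₀) with h | h
      · exact h
      · exact absurd ⟨σ t₀, fun t => le_antisymm (hgmax t) (h ▸ hgmin t)⟩ hnc
    have hperT : σ (t₀ + T) = σ t₀ := by
      have := hper t₀; simpa [add_comm] using this
    have ht₁lt : t₁ ∈ Ioo t₀ (t₀ + T) := by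
      constructor
      · exact lt_of_le_of_ne ht₁mem.1 (fun h => by rw [← h] at hlt; exact lt_irrefl _ hlt)
      · exact lt_of_le_of_ne ht₁mem.2 (fun h => by rw [h, hperT] at hlt; exact lt_irrefl _ hlt)
    -- zeros of v
    have hv0 : deriv σ t₀ = 0 :=
      IsLocalMax.deriv_eq_zero (Filter.Eventually.of_forall hgmax)
    have hv1 : deriv σ t₁ = 0 :=
      IsLocalMin.deriv_eq_zero (Filter.Eventually.of_forall hgmin)
    have hv2 : deriv σ (t₀ + T) = 0 := by
      refine IsLocalMax.deriv_eq_zero (Filter.Eventually.of_forall ?_)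
      intro t; rw [hperT]; exact hgmax t
    -- nondegeneracy on each half
    have hex1 : ∃ s ∈ Ioo t₀ t₁, deriv σ s ≠ 0 := by
      by_contra h
      push_neg at h
      have hmono : MonotoneOn σ (Icc t₀ t₁) := by
        refine monotoneOn_of_deriv_nonneg (convex_Icc _ _) hcont.continuousOn
          hd1.differentiableOn ?_
        intro t ht
        rw [interior_Icc] at ht
        rw [h t ht]
      have := hmono (left_mem_Icc.mpr ht₁lt.1.le) (right_mem_Icc.mpr ht₁lt.1.le) ht₁lt.1.le
      linarith
    have hex2 : ∃ s ∈ Ioo t₁ (t₀ + T), deriv σ s ≠ 0 := by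
      by_contra h
      push_neg at h
      have hanti : AntitoneOn σ (Icc t₁ (t₀ + T)) := by
        refine antitoneOn_of_deriv_nonpos (convex_Icc _ _) hcont.continuousOn
          hd1.differentiableOn ?_
        intro t ht
        rw [interior_Icc] at ht
        rw [h t ht]
      have := hanti (left_mem_Icc.mpr ht₁lt.2.le) (right_mem_Icc.mpr ht₁lt.2.le) ht₁lt.2.le
      rw [hperT] at this
      linarith
    obtain ⟨s1, hs1, hvs1⟩ := hex1
    obtain ⟨s2, hs2, hvs2⟩ := hex2
    have g1 : π < t₁ - t₀ := gapB σ hσ hode t₀ t₁ ht₁lt.1 hv0 hv1 s1 hs1 hvs1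
    have g2 : π < (t₀ + T) - t₁ := gapB σ hσ hode t₁ (t₀ + T) ht₁lt.2 hv1 hv2 s2 hs2 hvs2
    linarith
  refine ⟨main, fun h1 => ?_⟩
  have := main 1 one_pos h1
  have hπ := Real.pi_gt_three
  linarith
end
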